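/- arXiv:1504.05924 — 2 statements merged into one kernel-verified Lean document; each statement's English description precedes it below -/
import Mathlib

section
/- Suppose the trivial extension algebra A⋉X satisfies condition (★), X is 2-torsion free, and L is a Lie derivation on A⋉X with components L(a,x) = (L_A(a)+T(x), L_X(a)+S(x)). Then L_X(qap) = 0 for all a∈A. -/
open TrivSqZeroExt MulOpposite

section Corner

variable {A X : Type*} [Ring A] [AddCommGroup X] [Module A X] [Module Aᵐᵒᵖ X] {p : A}

theorem smul_eq_self_of_corner [SMulCommClass A Aᵐᵒᵖ X] (hp : IsIdempotentElem p)
    (hstar : ∀ x : X, op (1 - p) • (p • x) = x) (x : X) : p • x = x :=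
  calc p • x = p • op (1 - p) • (p • x) := by rw [hstar]
    _ = op (1 - p) • ((p * p) • x) := by rw [smul_comm, mul_smul]
    _ = x := by rw [hp.eq, hstar]

theorem one_sub_smul_eq_zero_of_corner [SMulCommClass A Aᵐᵒᵖ X] (hp : IsIdempotentElem p)
    (hstar : ∀ x : X, op (1 - p) • (p • x) = x) (x : X) : (1 - p) • x = 0 := by
  rw [sub_smul, one_smul, smul_eq_self_of_corner hp hstar, sub_self]

theorem op_smul_eq_zero_of_corner (hp : IsIdempotentElem p)
    (hstar : ∀ x : X, op (1 - p) • (p • x) = x) (x : X) : op p • x = 0 :=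
  calc op p • x = op p • op (1 - p) • (p • x) := by rw [hstar]
    _ = op ((1 - p) * p) • (p • x) := by rw [← mul_smul, op_mul]
    _ = 0 := by rw [sub_mul, one_mul, hp.eq, sub_self, op_zero, zero_smul]

theorem offCorner_smul_eq_zero [SMulCommClass A Aᵐᵒᵖ X] (hp : IsIdempotentElem p)
    (hstar : ∀ x : X, op (1 - p) • (p • x) = x) (a : A) (x : X) :
    ((1 - p) * a * p) • x = 0 := by
  rw [mul_assoc, mul_smul, one_sub_smul_eq_zero_of_corner hp hstar]

theorem offCorner_op_smul_eq_zero (hp : IsIdempotentElem p)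
    (hstar : ∀ x : X, op (1 - p) • (p • x) = x) (a : A) (x : X) :
    op ((1 - p) * a * p) • x = 0 := by
  rw [op_mul, mul_smul, op_smul_eq_zero_of_corner hp hstar]

end Corner

section TrivSqZeroExt

variable {R A X : Type*} [Semiring R] [Ring A] [Module R A] [AddCommGroup X] [Module R X]
  [Module A X] [Module Aᵐᵒᵖ X]

theorem snd_inl_mul_sub_mul_inl (c : A) (u : TrivSqZeroExt A X) :
    (inl c * u - u * inl c).snd = c • u.snd - op c • u.snd := by
  simp [snd_mul]

theorem snd_map_inl_commutator {L : TrivSqZeroExt A X →ₗ[R] TrivSqZeroExt A X}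
    (hLie : ∀ u v : TrivSqZeroExt A X,
      L (u * v - v * u) = (L u * v - v * L u) + (u * L v - L v * u)) (c d : A) :
    (L (inl (c * d - d * c))).snd =
      (op d • (L (inl c)).snd - d • (L (inl c)).snd) +
        (c • (L (inl d)).snd - op c • (L (inl d)).snd) := by
  rw [inl_sub, inl_mul, inl_mul, hLie, snd_add, snd_inl_mul_sub_mul_inl, ← neg_sub, snd_neg,
    snd_inl_mul_sub_mul_inl, neg_sub]

end TrivSqZeroExt

theorem lieDerivation_component_LX_offCorner_zero_general
    {R A X : Type*} [CommRing R] [Ring A] [Algebra R A]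
    [AddCommGroup X] [Module R X] [Module A X] [Module Aᵐᵒᵖ X]
    [SMulCommClass A Aᵐᵒᵖ X]
    (p : A) (hp : p * p = p)
    (hstar : ∀ x : X, op (1 - p) • (p • x) = x)
    (htorX : ∀ x : X, x + x = 0 → x = 0)
    (L : TrivSqZeroExt A X →ₗ[R] TrivSqZeroExt A X)
    (hLie : ∀ u v : TrivSqZeroExt A X,
        L (u * v - v * u) = (L u * v - v * L u) + (u * L v - L v * u))
    (LA : A →ₗ[R] A) (T : X →ₗ[R] A) (LX : A →ₗ[R] X) (S : X →ₗ[R] X)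
    (hL : ∀ (a : A) (x : X), L (inl a + inr x) = inl (LA a + T x) + inr (LX a + S x)) :
    ∀ a : A, LX ((1 - p) * a * p) = 0 := by
  intro a
  set b := (1 - p) * a * p
  have hLX : (L (inl b)).snd = LX b := by simpa using congrArg snd (hL b 0)
  have hcomm : p * b - b * p = -b := by
    simp only [b, mul_assoc, hp, mul_sub, sub_mul, ← mul_assoc p p, one_mul]
    abel
  -- `b` annihilates `X` from both sides, so of the Lie identity for `(p, b)`
  -- only `p • L_X(b)` survives.
  have hneg : -LX b = LX b := by
    have key := snd_map_inl_commutator hLie p b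
    rwa [hcomm, inl_neg, map_neg, snd_neg, hLX, offCorner_op_smul_eq_zero hp hstar,
      offCorner_smul_eq_zero hp hstar, smul_eq_self_of_corner hp hstar,
      op_smul_eq_zero_of_corner hp hstar, sub_zero, sub_zero, zero_add] at key
  exact htorX _ (neg_eq_iff_add_eq_zero.mp hneg)

/-- If `A ⋉ X` satisfies (★), `X` is 2-torsion free and `L`
is a Lie derivation on `A ⋉ X` with components `(L_A, T, L_X, S)`, then
`L_X(qap) = 0` for all `a ∈ A`, where `q = 1 - p`. -/
theorem lieDerivation_component_LX_offCorner_zero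
    {R A X : Type*} [CommRing R] [Ring A] [Algebra R A]
    [AddCommGroup X] [Module R X] [Module A X] [Module Aᵐᵒᵖ X]
    [SMulCommClass A Aᵐᵒᵖ X] [IsScalarTower R A X] [IsScalarTower R Aᵐᵒᵖ X]
    (p : A) (hp : p * p = p) (hp0 : p ≠ 0) (hp1 : p ≠ 1)
    (hstar : ∀ x : X, op (1 - p) • (p • x) = x)
    (htorX : ∀ x : X, x + x = 0 → x = 0)
    (L : TrivSqZeroExt A X →ₗ[R] TrivSqZeroExt A X)
    (hLie : ∀ u v : TrivSqZeroExt A X,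
        L (u * v - v * u) = (L u * v - v * L u) + (u * L v - L v * u))
    (LA : A →ₗ[R] A) (T : X →ₗ[R] A) (LX : A →ₗ[R] X) (S : X →ₗ[R] X)
    (hL : ∀ (a : A) (x : X), L (inl a + inr x) = inl (LA a + T x) + inr (LX a + S x)) :
    ∀ a : A, LX ((1 - p) * a * p) = 0 :=
  lieDerivation_component_LX_offCorner_zero_general p hp hstar htorX L hLie LA T LX S hL
end

section
/- Let A and B be unital algebras. The direct product algebra A×B (with componentwise operations) has the Lie derivation property if and only if both A and B have the Lie derivation property. -/
/-- `L` is a Lie derivation on `C`. -/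
def IsLieDerivation {R C : Type*} [CommRing R] [Ring C] [Module R C]
    (L : C →ₗ[R] C) : Prop :=
  ∀ u v : C, L (u * v - v * u) = (L u * v - v * L u) + (u * L v - L v * u)

/-- `L` is a proper Lie derivation on `C`: a sum of a derivation and a
center-valued linear map vanishing on commutators. -/
def IsProperLieDerivation {R C : Type*} [CommRing R] [Ring C] [Module R C]
    (L : C →ₗ[R] C) : Prop :=
  ∃ D ℓ : C →ₗ[R] C,
    (∀ u v : C, D (u * v) = D u * v + u * D v)
    ∧ (∀ u : C, ℓ u ∈ Set.center C)
    ∧ (∀ u v : C, ℓ (u * v - v * u) = 0)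
    ∧ L = D + ℓ

/-- `C` has the Lie derivation property: every Lie derivation on `C` is proper. -/
def HasLieDerivationProperty (R C : Type*) [CommRing R] [Ring C] [Module R C] : Prop :=
  ∀ L : C →ₗ[R] C, IsLieDerivation L → IsProperLieDerivation L

/-!
An endomorphism `L` of `A × B` is a 2 × 2 block matrix. Evaluating the Lie identity on pairs
`(a, 0)` and `(0, b)` shows that for a Lie derivation the diagonal blocks are Lie derivations of
`A` and `B`, while the off-diagonal part `L - blockDiagonal L` is central-valued and kills
commutators, so it can be absorbed into the central part of a decomposition of the diagonal
blocks. Conversely, a Lie derivation of `A` extends by `0` to one of `A × B`, and compressing a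
decomposition of the extension to the corner `A` yields one of the original map.
-/

open LinearMap

theorem IsProperLieDerivation.add_of_central {R C : Type*} [CommRing R] [Ring C] [Module R C]
    {L ℓ : C →ₗ[R] C} (hL : IsProperLieDerivation L) (hℓ_center : ∀ u, ℓ u ∈ Set.center C)
    (hℓ_comm : ∀ u v, ℓ (u * v - v * u) = 0) : IsProperLieDerivation (L + ℓ) := by
  obtain ⟨D, ℓ₀, hD, hℓ₀_center, hℓ₀_comm, rfl⟩ := hL
  exact ⟨D, ℓ₀ + ℓ, hD, fun u ↦ Set.add_mem_center (hℓ₀_center u) (hℓ_center u),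
    fun u v ↦ by simp [hℓ₀_comm, hℓ_comm], add_assoc D ℓ₀ ℓ⟩

section Prod

variable {R A B : Type*} [CommRing R] [Ring A] [Ring B] [Module R A] [Module R B]

theorem IsLieDerivation.zero : IsLieDerivation (0 : A →ₗ[R] A) := fun _ _ ↦ by simp

theorem IsLieDerivation.prodMap {LA : A →ₗ[R] A} {LB : B →ₗ[R] B} (hA : IsLieDerivation LA)
    (hB : IsLieDerivation LB) : IsLieDerivation (LA.prodMap LB) := fun u v ↦
  Prod.ext (by simpa using hA u.1 v.1) (by simpa using hB u.2 v.2)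

theorem IsProperLieDerivation.prodMap {LA : A →ₗ[R] A} {LB : B →ₗ[R] B}
    (hA : IsProperLieDerivation LA) (hB : IsProperLieDerivation LB) :
    IsProperLieDerivation (LA.prodMap LB) := by
  obtain ⟨DA, ℓA, hDA, hℓA_center, hℓA_comm, rfl⟩ := hA
  obtain ⟨DB, ℓB, hDB, hℓB_center, hℓB_comm, rfl⟩ := hB
  refine ⟨DA.prodMap DB, ℓA.prodMap ℓB,
    fun u v ↦ Prod.ext (by simp [hDA]) (by simp [hDB]),
    fun u ↦ Set.center_prod (M := A) (N := B) ▸ ⟨hℓA_center u.1, hℓB_center u.2⟩,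
    fun u v ↦ Prod.ext (by simp [hℓA_comm]) (by simp [hℓB_comm]), ?_⟩
  ext <;> simp

variable {L : (A × B) →ₗ[R] (A × B)}

theorem IsLieDerivation.fst_comp_comp_inl (hL : IsLieDerivation L) :
    IsLieDerivation (fst R A B ∘ₗ L ∘ₗ inl R A B) := fun u v ↦ by
  simpa using congrArg Prod.fst (hL (u, 0) (v, 0))

theorem IsLieDerivation.snd_comp_comp_inr (hL : IsLieDerivation L) :
    IsLieDerivation (snd R A B ∘ₗ L ∘ₗ inr R A B) := fun u v ↦ by
  simpa using congrArg Prod.snd (hL (0, u) (0, v))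

theorem IsProperLieDerivation.fst_comp_comp_inl (hL : IsProperLieDerivation L) :
    IsProperLieDerivation (fst R A B ∘ₗ L ∘ₗ inl R A B) := by
  obtain ⟨D, ℓ, hD, hℓ_center, hℓ_comm, rfl⟩ := hL
  refine ⟨fst R A B ∘ₗ D ∘ₗ inl R A B, fst R A B ∘ₗ ℓ ∘ₗ inl R A B,
    fun u v ↦ by simpa using congrArg Prod.fst (hD (u, 0) (v, 0)),
    fun u ↦ (Set.center_prod (M := A) (N := B) ▸ hℓ_center (u, 0)).1,
    fun u v ↦ by simpa using congrArg Prod.fst (hℓ_comm (u, 0) (v, 0)), ?_⟩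
  ext; simp

theorem IsProperLieDerivation.snd_comp_comp_inr (hL : IsProperLieDerivation L) :
    IsProperLieDerivation (snd R A B ∘ₗ L ∘ₗ inr R A B) := by
  obtain ⟨D, ℓ, hD, hℓ_center, hℓ_comm, rfl⟩ := hL
  refine ⟨snd R A B ∘ₗ D ∘ₗ inr R A B, snd R A B ∘ₗ ℓ ∘ₗ inr R A B,
    fun u v ↦ by simpa using congrArg Prod.snd (hD (0, u) (0, v)),
    fun u ↦ (Set.center_prod (M := A) (N := B) ▸ hℓ_center (0, u)).2,
    fun u v ↦ by simpa using congrArg Prod.snd (hℓ_comm (0, u) (0, v)), ?_⟩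
  ext; simp

theorem IsLieDerivation.snd_apply_inl_mem_center (hL : IsLieDerivation L) (a : A) :
    (L (a, 0)).2 ∈ Set.center B :=
  Semigroup.mem_center_iff.mpr fun g ↦
    sub_eq_zero.mp (by simpa using (congrArg Prod.snd (hL (0, g) (a, 0))).symm)

theorem IsLieDerivation.fst_apply_inr_mem_center (hL : IsLieDerivation L) (b : B) :
    (L (0, b)).1 ∈ Set.center A :=
  Semigroup.mem_center_iff.mpr fun g ↦
    sub_eq_zero.mp (by simpa using (congrArg Prod.fst (hL (g, 0) (0, b))).symm)

theorem IsLieDerivation.snd_apply_inl_commutator (hL : IsLieDerivation L) (u v : A) :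
    (L (u * v - v * u, 0)).2 = 0 := by
  simpa using congrArg Prod.snd (hL (u, 0) (v, 0))

theorem IsLieDerivation.fst_apply_inr_commutator (hL : IsLieDerivation L) (u v : B) :
    (L (0, u * v - v * u)).1 = 0 := by
  simpa using congrArg Prod.fst (hL (0, u) (0, v))

variable (L) in
def blockDiagonal : (A × B) →ₗ[R] (A × B) :=
  (fst R A B ∘ₗ L ∘ₗ inl R A B).prodMap (snd R A B ∘ₗ L ∘ₗ inr R A B)

variable (L) in
theorem sub_blockDiagonal_apply (w : A × B) :
    (L - blockDiagonal L) w = ((L (0, w.2)).1, (L (w.1, 0)).2) := by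
  obtain ⟨a, b⟩ := w
  have hL : L (a, b) = L (a, 0) + L (0, b) := by
    rw [← map_add, Prod.mk_add_mk, add_zero, zero_add]
  ext <;> simp [blockDiagonal, hL]

theorem IsLieDerivation.sub_blockDiagonal_mem_center (hL : IsLieDerivation L) (w : A × B) :
    (L - blockDiagonal L) w ∈ Set.center (A × B) := by
  rw [sub_blockDiagonal_apply, Set.center_prod]
  exact ⟨hL.fst_apply_inr_mem_center w.2, hL.snd_apply_inl_mem_center w.1⟩

theorem IsLieDerivation.sub_blockDiagonal_commutator (hL : IsLieDerivation L) (u v : A × B) :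
    (L - blockDiagonal L) (u * v - v * u) = 0 := by
  rw [sub_blockDiagonal_apply]
  ext
  · exact hL.fst_apply_inr_commutator u.2 v.2
  · exact hL.snd_apply_inl_commutator u.1 v.1

end Prod

/-- The direct product algebra `A × B` has the Lie
derivation property if and only if both `A` and `B` do. -/
theorem prod_hasLieDerivationProperty_iff
    {R A B : Type*} [CommRing R] [Ring A] [Ring B] [Algebra R A] [Algebra R B] :
    HasLieDerivationProperty R (A × B)
      ↔ (HasLieDerivationProperty R A ∧ HasLieDerivationProperty R B) := by
  constructor
  · intro h
    exact ⟨fun LA hLA ↦ (h _ (hLA.prodMap (IsLieDerivation.zero (A := B)))).fst_comp_comp_inl,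
      fun LB hLB ↦ (h _ ((IsLieDerivation.zero (A := A)).prodMap hLB)).snd_comp_comp_inr⟩
  · rintro ⟨hA, hB⟩ L hL
    have hdiag := (hA _ hL.fst_comp_comp_inl).prodMap (hB _ hL.snd_comp_comp_inr)
    rw [← add_sub_cancel (blockDiagonal L) L]
    exact hdiag.add_of_central hL.sub_blockDiagonal_mem_center hL.sub_blockDiagonal_commutator
end
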